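/- Let h ≥ 2 be an integer and ε > 0, and let (P, ≺) be a partially ordered set on n elements with comparability graph G. If the number of (2h−1)-tuples (x_1, x_2, ..., x_{2h−1}) of elements of P with x_1 ≺ x_2 ≺ ... ≺ x_{2h−1} is at least ε·n^{2h−1}, then G contains K_h[⌈ε·n⌉]. -/

import Mathlib

/-- The number of `r`-element vertex subsets of `G` inducing a complete subgraph
(copies of `K_r`). -/
noncomputable def cliqueCount {V : Type*} [Fintype V] (G : SimpleGraph V) (r : ℕ) : ℕ :=
  Set.ncard {s : Finset V | s.card = r ∧ G.IsClique (s : Set V)}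

/-- `G` contains `K_r[t]`: `r` pairwise disjoint vertex sets of size `t` with all
pairs of vertices from distinct sets adjacent. -/
def ContainsBlowup {V : Type*} (G : SimpleGraph V) (r t : ℕ) : Prop :=
  ∃ A : Fin r → Finset V,
    (∀ i, (A i).card = t) ∧
    (∀ i j, i ≠ j → Disjoint (A i) (A j)) ∧
    (∀ i j, i ≠ j → ∀ x ∈ A i, ∀ y ∈ A j, G.Adj x y)

/-- The ordered graph `G` on `Fin n` contains an induced monotone path with `m`
vertices: `v 0 < v 1 < ⋯ < v (m-1)` with adjacency exactly between consecutive
vertices. -/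
def HasIndMonPath {n : ℕ} (G : SimpleGraph (Fin n)) (m : ℕ) : Prop :=
  ∃ v : Fin m → Fin n, StrictMono v ∧
    ∀ i j : Fin m, G.Adj (v i) (v j) ↔ ((i : ℕ) + 1 = (j : ℕ) ∨ (j : ℕ) + 1 = (i : ℕ))

/-- The comparability graph of a relation `R` (e.g. a strict partial order):
distinct elements are adjacent iff they are related in one direction. -/
def compGraph {α : Type*} (R : α → α → Prop) : SimpleGraph α where
  Adj x y := x ≠ y ∧ (R x y ∨ R y x)
  symm := ⟨fun _ _ h => ⟨h.1.symm, h.2.symm⟩⟩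
  loopless := ⟨fun _ h => h.1 rfl⟩

/-! Write a chain `x₀ ≺ x₁ ≺ ⋯ ≺ x₂ₘ` of length `2h - 1` (`h = m + 1`) as its odd entries
`y = (x₁, x₃, …, x₂ₘ₋₁)` together with its even entries. Given `y`, the entry `x₂ₖ` lies in the
gap above `y₀, …, yₖ₋₁` and below `yₖ, …, yₘ₋₁`, so the number of chains is at most
`∑_y ∏_k |gap_k(y)|`. Averaging over the `n ^ m` tuples `y` yields one with
`∏_k |gap_k(y)| ≥ ε n ^ (m + 1)`, and as every factor is at most `n`, each of the `h` gaps has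
at least `ε n` elements. Any two elements of distinct gaps are comparable, so `⌈ε n⌉` elements
from each gap span a `K_h[⌈ε n⌉]`. -/

open Finset

theorem le_of_mul_pow_card_le_prod {ι : Type*} [Fintype ι] {a : ι → ℝ} {c n : ℝ}
    (ha : ∀ i, 0 ≤ a i) (han : ∀ i, a i ≤ n) (h : c * n ^ Fintype.card ι ≤ ∏ i, a i) (k : ι) :
    c * n ≤ a k := by
  classical
  set P := ∏ _i ∈ univ.erase k, n
  have hP : c * n * P ≤ a k * P := calc
    c * n * P = c * n ^ Fintype.card ι := by
      rw [mul_assoc, mul_prod_erase univ (fun _ => n) (mem_univ k), prod_const, card_univ]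
    _ ≤ ∏ i, a i := h
    _ = a k * ∏ i ∈ univ.erase k, a i := (mul_prod_erase univ a (mem_univ k)).symm
    _ ≤ a k * P := mul_le_mul_of_nonneg_left
        (prod_le_prod (fun i _ => ha i) (fun i _ => han i)) (ha k)
  rcases (prod_nonneg fun _ _ => (ha k).trans (han k) : 0 ≤ P).eq_or_lt with hP0 | hP0
  · rw [prod_const] at hP0
    rw [eq_zero_of_pow_eq_zero hP0.symm, mul_zero]
    exact ha k
  · exact le_of_mul_le_mul_right hP hP0

theorem containsBlowup_compGraph {α : Type*} {R : α → α → Prop} [Std.Irrefl R] {r t : ℕ}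
    (S : Fin r → Finset α) (hcard : ∀ i, t ≤ #(S i))
    (hrel : ∀ i j, i < j → ∀ a ∈ S i, ∀ b ∈ S j, R a b) :
    ContainsBlowup (compGraph R) r t := by
  choose A hAS hAcard using fun i => exists_subset_card_eq (hcard i)
  have hcomp : ∀ i j, i ≠ j → ∀ a ∈ A i, ∀ b ∈ A j, R a b ∨ R b a := by
    intro i j hij a ha b hb
    rcases hij.lt_or_gt with hlt | hgt
    exacts [.inl (hrel i j hlt a (hAS i ha) b (hAS j hb)),
      .inr (hrel j i hgt b (hAS j hb) a (hAS i ha))]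
  refine ⟨A, hAcard, fun i j hij => disjoint_left.2 fun a hi hj => ?_,
    fun i j hij a ha b hb => ⟨?_, hcomp i j hij a ha b hb⟩⟩
  · exact (hcomp i j hij a hi a hj).elim (irrefl a) (irrefl a)
  · rintro rfl
    exact (hcomp i j hij a ha a hb).elim (irrefl a) (irrefl a)

section Chains

variable {α : Type*} [Fintype α] (R : α → α → Prop)

open Classical in
noncomputable def chainTuples (k : ℕ) : Finset (Fin k → α) :=
  {x | ∀ ⦃i j⦄, i < j → R (x i) (x j)}

theorem coe_chainTuples_succ [IsTrans α R] (n : ℕ) :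
    (chainTuples R (n + 1) : Set (Fin (n + 1) → α)) =
      {x | ∀ i : ℕ, ∀ hi : i + 1 < n + 1,
        R (x ⟨i, Nat.lt_of_succ_lt hi⟩) (x ⟨i + 1, hi⟩)} := by
  ext x
  simp only [chainTuples, coe_filter, mem_univ, true_and, Set.mem_ofPred_eq]
  exact (Fin.liftFun_iff_succ R).trans ⟨fun H i hi => H ⟨i, by omega⟩, fun H i => H i (by omega)⟩

open Classical in
/-- `gap R y k` holds the elements that can occupy position `2k` of a chain of length `2m + 1`
whose odd positions carry `y`. -/
noncomputable def gap {m : ℕ} (y : Fin m → α) (k : Fin (m + 1)) : Finset α :=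
  {a | (∀ j : Fin m, (j : ℕ) < k → R (y j) a) ∧ ∀ j : Fin m, (k : ℕ) ≤ j → R a (y j)}

variable {R}

theorem rel_of_mem_gap [IsTrans α R] {m : ℕ} {y : Fin m → α} {i j : Fin (m + 1)} (hij : i < j)
    {a b : α} (ha : a ∈ gap R y i) (hb : b ∈ gap R y j) : R a b := by
  simp only [gap, mem_filter, mem_univ, true_and] at ha hb
  have hi : (i : ℕ) < m := by omega
  exact _root_.trans (ha.2 ⟨i, hi⟩ le_rfl) (hb.1 ⟨i, hi⟩ hij)

def evenPos {m : ℕ} (k : Fin (m + 1)) : Fin (2 * m + 1) := ⟨2 * k, by omega⟩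

def oddPos {m : ℕ} (j : Fin m) : Fin (2 * m + 1) := ⟨2 * j + 1, by omega⟩

theorem exists_evenPos_or_oddPos {m : ℕ} (i : Fin (2 * m + 1)) :
    (∃ k, evenPos k = i) ∨ ∃ j, oddPos j = i := by
  obtain ⟨c, hc | hc⟩ := Nat.even_or_odd' i
  · exact .inl ⟨⟨c, by omega⟩, Fin.ext (by simp [evenPos, hc])⟩
  · exact .inr ⟨⟨c, by omega⟩, Fin.ext (by simp [oddPos, hc])⟩

theorem apply_evenPos_mem_gap {m : ℕ} {x : Fin (2 * m + 1) → α}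
    (hx : x ∈ chainTuples R (2 * m + 1)) (k : Fin (m + 1)) :
    x (evenPos k) ∈ gap R (x ∘ oddPos) k := by
  simp only [chainTuples, gap, mem_filter, mem_univ, true_and, Function.comp_apply] at hx ⊢
  exact ⟨fun j hj => hx (Fin.mk_lt_mk.2 (by omega)), fun j hj => hx (Fin.mk_lt_mk.2 (by omega))⟩

theorem card_chainTuples_le_sum_prod_card_gap (m : ℕ) :
    #(chainTuples R (2 * m + 1)) ≤ ∑ y : Fin m → α, ∏ k, #(gap R y k) := by
  classical
  let split (x : Fin (2 * m + 1) → α) : (_ : Fin m → α) × (Fin (m + 1) → α) :=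
    ⟨x ∘ oddPos, x ∘ evenPos⟩
  have split_injective : Function.Injective split := by
    intro x x' hxx'
    simp only [split, Sigma.mk.injEq, heq_eq_eq] at hxx'
    funext i
    obtain ⟨k, rfl⟩ | ⟨j, rfl⟩ := exists_evenPos_or_oddPos i
    exacts [congrFun hxx'.2 k, congrFun hxx'.1 j]
  calc #(chainTuples R (2 * m + 1))
      ≤ #(univ.sigma fun y => Fintype.piFinset (gap R y)) :=
        card_le_card_of_injOn split
          (fun x hx => mem_sigma.2 ⟨mem_univ _, Fintype.mem_piFinset.2 (apply_evenPos_mem_gap hx)⟩)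
          split_injective.injOn
    _ = ∑ y : Fin m → α, ∏ k, #(gap R y k) := by simp only [card_sigma, Fintype.card_piFinset]

theorem exists_le_prod_card_gap [Nonempty α] {m : ℕ} {ε : ℝ}
    (hchains : ε * (Fintype.card α : ℝ) ^ (2 * m + 1) ≤ #(chainTuples R (2 * m + 1))) :
    ∃ y : Fin m → α, ε * (Fintype.card α : ℝ) ^ (m + 1) ≤ ∏ k, (#(gap R y k) : ℝ) := by
  obtain ⟨y, -, hy⟩ := exists_le_of_sum_le univ_nonempty <| calc
    ∑ _y : Fin m → α, ε * (Fintype.card α : ℝ) ^ (m + 1)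
        = ε * (Fintype.card α : ℝ) ^ (2 * m + 1) := by
          simp only [sum_const, card_univ, Fintype.card_fun, Fintype.card_fin, nsmul_eq_mul]
          push_cast
          ring
    _ ≤ #(chainTuples R (2 * m + 1)) := hchains
    _ ≤ ∑ y : Fin m → α, ∏ k, (#(gap R y k) : ℝ) := by
          exact_mod_cast card_chainTuples_le_sum_prod_card_gap m
  exact ⟨y, hy⟩

end Chains

theorem stmt_11_general (h : ℕ) (ε : ℝ)
    (α : Type) [Fintype α] (R : α → α → Prop) (hR : IsStrictOrder α R)
    (hchains : ε * (Fintype.card α : ℝ) ^ (2 * h - 1) ≤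
      (Set.ncard {x : Fin (2 * h - 1) → α |
        ∀ i : ℕ, ∀ hi : i + 1 < 2 * h - 1,
          R (x ⟨i, Nat.lt_of_succ_lt hi⟩) (x ⟨i + 1, hi⟩)} : ℝ)) :
    ContainsBlowup (compGraph R) h ⌈ε * (Fintype.card α : ℝ)⌉₊ := by
  obtain _ | m := h
  · exact containsBlowup_compGraph Fin.elim0 (fun i => i.elim0) (fun i => i.elim0)
  rcases isEmpty_or_nonempty α with _ | _
  · exact containsBlowup_compGraph (fun _ => ∅) (by simp) (by simp)
  rw [show 2 * (m + 1) - 1 = 2 * m + 1 by omega, ← coe_chainTuples_succ,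
    Set.ncard_coe_finset] at hchains
  obtain ⟨y, hy⟩ := exists_le_prod_card_gap hchains
  refine containsBlowup_compGraph (gap R y) (fun k => Nat.ceil_le.2 ?_)
    (fun i j hij a ha b hb => rel_of_mem_gap hij ha hb)
  exact le_of_mul_pow_card_le_prod (a := fun k => (#(gap R y k) : ℝ)) (fun _ => Nat.cast_nonneg _)
    (fun _ => by exact_mod_cast card_le_univ _) (by simpa using hy) k

theorem stmt_11 (h : ℕ) (hh : 2 ≤ h) (ε : ℝ) (hε : 0 < ε)
    (α : Type) [Fintype α] (R : α → α → Prop) (hR : IsStrictOrder α R)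
    (hchains : ε * (Fintype.card α : ℝ) ^ (2 * h - 1) ≤
      (Set.ncard {x : Fin (2 * h - 1) → α |
        ∀ i : ℕ, ∀ hi : i + 1 < 2 * h - 1,
          R (x ⟨i, Nat.lt_of_succ_lt hi⟩) (x ⟨i + 1, hi⟩)} : ℝ)) :
    ContainsBlowup (compGraph R) h ⌈ε * (Fintype.card α : ℝ)⌉₊ :=
  stmt_11_general h ε α R hR hchains
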